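/- arXiv:2507.04863 — 5 statements merged into one kernel-verified Lean document; each statement's English description precedes it below -/
import Mathlib

section
/- If $E$ is a field of characteristic $q > 0$ with $[E : E^q] = q^\delta$ for some integer $\delta \ge 0$, then for every finite field extension $E'/E$ one has $[E' : E'^q] = q^\delta$. -/
/-!
For a finite extension `L/K` in characteristic `q`, compute `[L : K^q]` through the two towers
`K^q ⊆ K ⊆ L` and `K^q ⊆ L^q ⊆ L`. Frobenius is an isomorphism `L ≃ L^q` carrying `K` onto `K^q`,
so `[L^q : K^q] = [L : K]`; cancelling this common factor gives `[L : L^q] = [K : K^q]`.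
-/

/-- The subfield of `q`-th powers of a field `E` of characteristic `q`. -/
noncomputable def qthPowerSubfield (E : Type) [Field E] (q : ℕ) [Fact q.Prime] [CharP E q] :
    Subfield E :=
  (frobenius E q).fieldRange

section

variable (q : ℕ) [Fact q.Prime]

theorem qthPowerSubfield_eq_map_top (L : Type) [Field L] [CharP L q] :
    qthPowerSubfield L q = (⊤ : Subfield L).map (frobenius L q) :=
  RingHom.fieldRange_eq_map _

theorem map_frobenius_fieldRange {E L : Type} [Field E] [Field L] [CharP E q] [CharP L q]
    (f : E →+* L) : f.fieldRange.map (frobenius L q) = (qthPowerSubfield E q).map f := by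
  rw [qthPowerSubfield, RingHom.map_fieldRange, RingHom.map_fieldRange, RingHom.frobenius_comm]

variable {L : Type} [Field L] [CharP L q]

theorem relfinrank_map_frobenius_qthPowerSubfield (K : Subfield L) :
    (K.map (frobenius L q)).relfinrank (qthPowerSubfield L q) = Module.finrank K L := by
  rw [qthPowerSubfield_eq_map_top, Subfield.relfinrank_map_map, Subfield.relfinrank_top_right]

theorem finrank_qthPowerSubfield_eq_relfinrank (K : Subfield L) [FiniteDimensional K L] :
    Module.finrank (qthPowerSubfield L q) L = (K.map (frobenius L q)).relfinrank K := by
  have hK : K.map (frobenius L q) ≤ K := by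
    rintro _ ⟨x, hx, rfl⟩
    exact pow_mem hx q
  have hL : K.map (frobenius L q) ≤ qthPowerSubfield L q := by
    rintro _ ⟨x, -, rfl⟩
    exact ⟨x, rfl⟩
  have key := (Subfield.relfinrank_mul_finrank_top hK).trans
    (Subfield.relfinrank_mul_finrank_top hL).symm
  rw [relfinrank_map_frobenius_qthPowerSubfield, mul_comm _ (Module.finrank K L)] at key
  exact (Nat.eq_of_mul_eq_mul_left Module.finrank_pos key).symm

theorem finrank_qthPowerSubfield_eq_of_finiteDimensional (E : Type) [Field E] [CharP E q]
    [Algebra E L] [FiniteDimensional E L] :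
    Module.finrank (qthPowerSubfield L q) L = Module.finrank (qthPowerSubfield E q) E := by
  have : FiniteDimensional (⊥ : IntermediateField E L).toSubfield L :=
    inferInstanceAs (FiniteDimensional (⊥ : IntermediateField E L) L)
  rw [finrank_qthPowerSubfield_eq_relfinrank q (⊥ : IntermediateField E L).toSubfield,
    IntermediateField.bot_toSubfield, map_frobenius_fieldRange, RingHom.fieldRange_eq_map,
    Subfield.relfinrank_map_map, Subfield.relfinrank_top_right]

end

/-- If `E` is a field of characteristic `q > 0` with `[E : E^q] = q ^ δ` for some
integer `δ ≥ 0`, then for every finite field extension `E'/E` one has `[E' : E'^q] = q ^ δ`. -/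
theorem qth_power_degree_stable_under_finite_extension
    (q : ℕ) [Fact q.Prime] (E : Type) [Field E] [CharP E q] (δ : ℕ)
    (hE : Module.finrank (qthPowerSubfield E q) E = q ^ δ)
    (E' : Type) [Field E'] [Algebra E E'] [FiniteDimensional E E'] [CharP E' q] :
    Module.finrank (qthPowerSubfield E' q) E' = q ^ δ := by
  rw [finrank_qthPowerSubfield_eq_of_finiteDimensional q E, hE]
end

section
/- Every finite extension of the perfect closure $E_{\mathrm{ins}}$ of a field $E$ of characteristic $q > 0$ inside a fixed algebraic closure $\overline{E}$ is of the form $\widetilde{E}_{\mathrm{ins}} = \widetilde{E} \cdot E_{\mathrm{ins}}$ for some finite separable extension $\widetilde{E}$ of $E$ inside $E_{\mathrm{sep}}$. -/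
/-!
`M` is generated over `E_ins` by finitely many elements `x`, and some `q`-power `x ^ q ^ n` of each
lies in `E_sep`. These powers generate a finite separable `T`, and `T ⊔ E_ins` recovers `M`
because every field containing `E_ins` is closed under `q`-th roots in `Ω`: it is algebraic over
the perfect field `E_ins`, hence perfect, so `Ω` is separable over it.
-/

open IntermediateField

theorem IntermediateField.fg_of_finiteDimensional {F E : Type*} [Field F] [Field E] [Algebra F E]
    (S : IntermediateField F E) [FiniteDimensional F S] : S.FG :=
  S.fg_of_fg_toSubalgebra <| Subalgebra.fg_of_fg_toSubmodule <|
    (Submodule.fg_iff_finiteDimensional _).2 ‹_›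

section

variable {E Ω : Type*} [Field E] [Field Ω] [Algebra E Ω] [Algebra.IsAlgebraic E Ω] [PerfectField Ω]
  (q : ℕ) [ExpChar E q]

theorem IntermediateField.mem_of_pow_mem_of_perfectClosure_le {K : IntermediateField E Ω}
    (hK : perfectClosure E Ω ≤ K) {x : Ω} {n : ℕ} (hx : x ^ q ^ n ∈ K) : x ∈ K := by
  let K' := extendScalars hK
  have : Algebra.IsAlgebraic (perfectClosure E Ω) Ω := .tower_top (K := E) _
  have : PerfectField K' := Algebra.IsAlgebraic.perfectField (perfectClosure E Ω)
  have : ExpChar K' q := expChar_of_injective_algebraMap (algebraMap E K').injective q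
  have hx' : x ∈ perfectClosure K' Ω :=
    (mem_perfectClosure_iff_pow_mem q).2 ⟨n, ⟨⟨_, hx⟩, rfl⟩⟩
  rw [perfectClosure.eq_bot_of_isSeparable K' Ω, mem_bot] at hx'
  obtain ⟨y, rfl⟩ := hx'
  exact y.2

theorem IntermediateField.adjoin_pow_sup_perfectClosure (S : Set Ω) (n : Ω → ℕ) :
    adjoin E ((fun x ↦ x ^ q ^ n x) '' S) ⊔ perfectClosure E Ω =
      adjoin E S ⊔ perfectClosure E Ω := by
  apply le_antisymm
  · refine sup_le (adjoin_le_iff.2 ?_) le_sup_right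
    rintro _ ⟨x, hx, rfl⟩
    exact pow_mem (le_sup_left (b := perfectClosure E Ω) (subset_adjoin E S hx)) _
  · refine sup_le (adjoin_le_iff.2 fun x hx ↦ ?_) le_sup_right
    exact mem_of_pow_mem_of_perfectClosure_le q le_sup_right
      (le_sup_left (b := perfectClosure E Ω) (subset_adjoin E _ ⟨x, hx, rfl⟩))

end

theorem finite_extension_of_perfectClosure_general (E : Type) [Field E]
    (Ω : Type) [Field Ω] [Algebra E Ω] [IsAlgClosure E Ω]
    (M : IntermediateField (perfectClosure E Ω) Ω)
    [FiniteDimensional (perfectClosure E Ω) M] :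
    ∃ T : IntermediateField E Ω, T ≤ separableClosure E Ω ∧ FiniteDimensional E T ∧
      M.restrictScalars E = T ⊔ perfectClosure E Ω := by
  have : Algebra.IsAlgebraic E Ω := IsAlgClosure.isAlgebraic
  have : IsAlgClosed Ω := IsAlgClosure.isAlgClosed E
  let q := ringExpChar E
  obtain ⟨S, rfl⟩ := M.fg_of_finiteDimensional
  have : ExpChar (separableClosure E Ω) q :=
    expChar_of_injective_algebraMap (algebraMap E _).injective q
  choose n hn using IsPurelyInseparable.pow_mem (separableClosure E Ω) q (E := Ω)
  refine ⟨adjoin E ((fun x ↦ x ^ q ^ n x) '' S), adjoin_le_iff.2 ?_, ?_, ?_⟩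
  · rintro _ ⟨x, -, rfl⟩
    obtain ⟨y, hy⟩ := hn x
    beta_reduce
    exact hy ▸ y.2
  · exact finiteDimensional_adjoin fun x _ ↦ Algebra.IsIntegral.isIntegral x
  · rw [restrictScalars_adjoin_eq_sup, adjoin_pow_sup_perfectClosure, sup_comm]

/-- Every finite extension of the perfect closure `E_ins` of a field `E` of
characteristic `q > 0` inside a fixed algebraic closure `Ω` has the form
`Ẽ_ins = Ẽ ⊔ E_ins` for some finite separable extension `Ẽ` of `E` inside `E_sep`. -/
theorem finite_extension_of_perfectClosure (q : ℕ) [Fact q.Prime] (E : Type) [Field E]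
    [CharP E q] (Ω : Type) [Field Ω] [Algebra E Ω] [IsAlgClosure E Ω]
    (M : IntermediateField (perfectClosure E Ω) Ω)
    [FiniteDimensional (perfectClosure E Ω) M] :
    ∃ T : IntermediateField E Ω, T ≤ separableClosure E Ω ∧ FiniteDimensional E T ∧
      M.restrictScalars E = T ⊔ perfectClosure E Ω :=
  finite_extension_of_perfectClosure_general E Ω M
end

section
/- Let $E$ be a field, $p$ a prime, and $E''$ an intermediate field of $E_{\mathrm{sep}}/E'$ such that $p$ does not divide the degree of any finite subextension of $E''/E'$. Then for every $\beta \in E_{\mathrm{sep}}$ there is a finite extension $E'_\beta$ of $E'$ inside $E''$ with $[E'_\beta(\beta) : E'_\beta] = [E''(\beta) : E'']$; in particular, one may take $E'_\beta$ to be the extension of $E'$ generated by the coefficients of the minimal polynomial of $\beta$ over $E''$. -/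
/-!
Let `q` be the minimal polynomial of `β` over `E''`, and let `F₀` be `E'` with the (finitely
many) coefficients of `q` adjoined. Then `F₀/E'` is finite since the coefficients are algebraic,
and `F₀ ≤ E''`. As `q` is defined over `F₀`, the minimal polynomial of `β` over `F₀` divides
`q`; conversely `q` divides it over `E''`. Hence both minimal polynomials agree and
`[F₀(β) : F₀] = [E''(β) : E'']`.
-/

open IntermediateField Polynomial

theorem finrank_adjoin_simple_eq_of_minpoly_mem_lifts {K L A : Type*} [Field K] [Field L]
    [Field A] [Algebra K L] [Algebra L A] [Algebra K A] [IsScalarTower K L A] {x : A}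
    (hx : IsIntegral K x) (h : minpoly L x ∈ lifts (algebraMap K L)) :
    Module.finrank K K⟮x⟯ = Module.finrank L L⟮x⟯ := by
  rw [adjoin.finrank hx, adjoin.finrank hx.tower_top, ← minpoly.map_algebraMap hx h,
    natDegree_map]

namespace IntermediateField

variable {E Ω : Type*} [Field E] [Field Ω] [Algebra E Ω]

theorem finrank_adjoin_simple_eq_of_minpoly_coeff_mem {F L : IntermediateField E Ω}
    (hFL : F ≤ L) {x : Ω} (hx : IsIntegral F x)
    (hcoeff : ∀ n, ((minpoly L x).coeff n : Ω) ∈ F) :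
    Module.finrank F F⟮x⟯ = Module.finrank L L⟮x⟯ := by
  let : Algebra F L := (inclusion hFL).toAlgebra
  have : IsScalarTower F L Ω := IsScalarTower.of_algebraMap_eq fun _ => rfl
  exact finrank_adjoin_simple_eq_of_minpoly_mem_lifts hx
    (lifts_iff_coeff_lifts _ |>.2 fun n => ⟨⟨_, hcoeff n⟩, rfl⟩)

theorem finiteDimensional_extendScalars_sup_adjoin (K : IntermediateField E Ω) {S : Set Ω}
    (hS : S.Finite) (hint : ∀ x ∈ S, IsIntegral K x) :
    FiniteDimensional K (extendScalars (le_sup_left : K ≤ K ⊔ adjoin E S)) := by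
  have hext : extendScalars (le_sup_left : K ≤ K ⊔ adjoin E S) = adjoin K S :=
    restrictScalars_injective E <| by
      rw [extendScalars_restrictScalars, restrictScalars_adjoin_eq_sup]
  have : Finite S := hS
  rw [hext]
  exact finiteDimensional_adjoin hint

theorem relfinrank_ne_zero_of_finiteDimensional {K L : IntermediateField E Ω} (h : K ≤ L)
    [FiniteDimensional K (extendScalars h)] : relfinrank K L ≠ 0 := by
  rw [relfinrank_eq_finrank_of_le h]
  exact Module.finrank_pos.ne'

end IntermediateField

theorem exists_finite_subextension_same_adjoin_degree_general
    (E Ω : Type) [Field E] [Field Ω] [Algebra E Ω] [IsSepClosure E Ω]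
    (E' E'' : IntermediateField E Ω) (hle : E' ≤ E'')
    (β : Ω) :
    let F0 : IntermediateField E Ω :=
      E' ⊔ IntermediateField.adjoin E
        (Set.range fun i : ℕ => (((minpoly (↥E'') β).coeff i : ↥E'') : Ω))
    F0 ≤ E'' ∧
      FiniteDimensional ↥E' ↥(IntermediateField.extendScalars (le_sup_left : E' ≤ F0)) ∧
      Module.finrank ↥F0 ↥(IntermediateField.adjoin ↥F0 ({β} : Set Ω)) =
        Module.finrank ↥E'' ↥(IntermediateField.adjoin ↥E'' ({β} : Set Ω)) ∧
      ∃ F : IntermediateField E Ω, E' ≤ F ∧ F ≤ E'' ∧ relfinrank E' F ≠ 0 ∧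
        Module.finrank ↥F ↥(IntermediateField.adjoin ↥F ({β} : Set Ω)) =
          Module.finrank ↥E'' ↥(IntermediateField.adjoin ↥E'' ({β} : Set Ω)) := by
  intro F0
  set S : Set Ω := Set.range fun i : ℕ => (((minpoly E'' β).coeff i : E'') : Ω)
  have hSfin : S.Finite :=
    ((minpoly E'' β).finite_range_coeff.image Subtype.val).subset (Set.range_comp _ _).le
  have hcoeff : ∀ n, (((minpoly E'' β).coeff n : E'') : Ω) ∈ F0 := fun n =>
    (le_sup_right : adjoin E S ≤ F0) (subset_adjoin E S ⟨n, rfl⟩)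
  have hF0 : F0 ≤ E'' :=
    sup_le hle (adjoin_le_iff.2 (Set.range_subset_iff.2 fun n => ((minpoly E'' β).coeff n).2))
  have hfd : FiniteDimensional E' (extendScalars (le_sup_left : E' ≤ F0)) :=
    finiteDimensional_extendScalars_sup_adjoin E' hSfin fun x _ =>
      (Algebra.IsSeparable.isIntegral E x).tower_top
  have hdeg := finrank_adjoin_simple_eq_of_minpoly_coeff_mem hF0
    (Algebra.IsSeparable.isIntegral E β).tower_top hcoeff
  exact ⟨hF0, hfd, hdeg, F0, le_sup_left, hF0, relfinrank_ne_zero_of_finiteDimensional _, hdeg⟩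

/-- Let `E''` be an intermediate field of `E_sep/E'` such that `p` does not divide
the degree of any finite subextension of `E''/E'`.  Then for every `β ∈ E_sep` there is a finite
extension `E'_β` of `E'` inside `E''` with `[E'_β(β) : E'_β] = [E''(β) : E'']`; in particular,
one may take `E'_β` to be the extension of `E'` generated by the coefficients of the minimal
polynomial of `β` over `E''`. -/
theorem exists_finite_subextension_same_adjoin_degree (p : ℕ) (hp : p.Prime)
    (E Ω : Type) [Field E] [Field Ω] [Algebra E Ω] [IsSepClosure E Ω]
    (E' E'' : IntermediateField E Ω) (hle : E' ≤ E'')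
    (hdiv : ∀ F : IntermediateField E Ω, E' ≤ F → F ≤ E'' →
      relfinrank E' F ≠ 0 → ¬ p ∣ relfinrank E' F)
    (β : Ω) :
    let F0 : IntermediateField E Ω :=
      E' ⊔ IntermediateField.adjoin E
        (Set.range fun i : ℕ => (((minpoly (↥E'') β).coeff i : ↥E'') : Ω))
    F0 ≤ E'' ∧
      FiniteDimensional ↥E' ↥(IntermediateField.extendScalars (le_sup_left : E' ≤ F0)) ∧
      Module.finrank ↥F0 ↥(IntermediateField.adjoin ↥F0 ({β} : Set Ω)) =
        Module.finrank ↥E'' ↥(IntermediateField.adjoin ↥E'' ({β} : Set Ω)) ∧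
      ∃ F : IntermediateField E Ω, E' ≤ F ∧ F ≤ E'' ∧ relfinrank E' F ≠ 0 ∧
        Module.finrank ↥F ↥(IntermediateField.adjoin ↥F ({β} : Set Ω)) =
          Module.finrank ↥E'' ↥(IntermediateField.adjoin ↥E'' ({β} : Set Ω)) :=
  exists_finite_subextension_same_adjoin_degree_general E Ω E' E'' hle β
end

section
/- Let $E$ be a field, $X$ transcendental over $E$, $F = E(X)$, and $F_1 = E_{\mathrm{sep}}(X)$. Then $F_1/F$ is a Galois extension, and there is a canonical isomorphism $\varphi : \mathcal{G}_E \to \mathrm{Gal}(F_1/F)$ of profinite groups such that for every intermediate field $E'$ of $E_{\mathrm{sep}}/E$, the image of $\mathcal{G}_{E'}$ under $\varphi$ equals $\mathrm{Gal}(F_1/E'(X))$. -/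
/-!
Every `σ ∈ Gal(L/K)` acts on the coefficients of `L(X)`, giving an injective homomorphism
`Gal(L/K) → Gal(L(X)/K(X))`. It is onto when `L/K` is normal: an automorphism `τ` of `L(X)` over
`K(X)` fixes `X` and sends a constant `c` to a root of the minimal polynomial of `c` over `K`;
that polynomial splits over `L`, so its roots in `L(X)` are constants, and `τ` acts on constants
through a `K`-automorphism of `L`. The constants generate `L(X)` over `K(X)` and are separable
with split minimal polynomials, so `L(X)/K(X)` is Galois. For continuity, a finite subextension
of `L(X)/K(X)` lies in `K'(X)` where `K'` is generated by the finitely many coefficients of its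
generators; the inverse is then continuous because `Gal(L/K)` is compact and
`Gal(L(X)/K(X))` is Hausdorff.
-/

open IntermediateField

/-- The canonical ring homomorphism `RatFunc E →+* RatFunc Ω` induced by a field embedding
`E → Ω`. -/
noncomputable def ratFuncMap (E Ω : Type) [Field E] [Field Ω] [Algebra E Ω] :
    RatFunc E →+* RatFunc Ω :=
  RatFunc.mapRingHom (Polynomial.mapRingHom (algebraMap E Ω)) (by
    intro x hx
    have hx0 : x ≠ 0 := mem_nonZeroDivisors_iff_ne_zero.mp hx
    refine Submonoid.mem_comap.mpr (mem_nonZeroDivisors_iff_ne_zero.mpr ?_)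
    simpa using (Polynomial.map_ne_zero_iff (f := algebraMap E Ω)
      (algebraMap E Ω).injective).mpr hx0)

open Polynomial

namespace RatFunc

open scoped RatFunc nonZeroDivisors

section Coeffs

variable {K L : Type*} [Field K] [Field L]

theorem ringHom_ext {R : Type*} [CommRing R] {f g : K⟮X⟯ →+* R}
    (hC : ∀ a, f (C a) = g (C a)) (hX : f X = g X) : f = g := by
  refine IsLocalization.ringHom_ext K[X]⁰ (Polynomial.ringHom_ext (fun a => ?_) ?_)
  · simpa only [RingHom.comp_apply, algebraMap_C] using hC a
  · simpa only [RingHom.comp_apply, algebraMap_X] using hX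

noncomputable def mapCoeffs (f : K →+* L) : K⟮X⟯ →+* L⟮X⟯ :=
  mapRingHom (Polynomial.mapRingHom f) <|
    nonZeroDivisors_le_comap_nonZeroDivisors_of_injective _ (Polynomial.map_injective f f.injective)

theorem mapCoeffs_algebraMap (f : K →+* L) (p : K[X]) :
    mapCoeffs f (algebraMap K[X] K⟮X⟯ p) = algebraMap L[X] L⟮X⟯ (p.map f) := by
  rw [mapCoeffs, coe_mapRingHom_eq_coe_map]
  simpa using map_apply_div (Polynomial.mapRingHom f) _ p 1

@[simp]
theorem mapCoeffs_C (f : K →+* L) (a : K) : mapCoeffs f (C a) = C (f a) := by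
  rw [← algebraMap_C, mapCoeffs_algebraMap, Polynomial.map_C, algebraMap_C]

@[simp]
theorem mapCoeffs_X (f : K →+* L) : mapCoeffs f X = X := by
  rw [← algebraMap_X, mapCoeffs_algebraMap, Polynomial.map_X, algebraMap_X]

theorem mapCoeffs_comp {M : Type*} [Field M] (g : L →+* M) (f : K →+* L) :
    mapCoeffs (g.comp f) = (mapCoeffs g).comp (mapCoeffs f) :=
  ringHom_ext (fun a => by simp) (by simp)

noncomputable def mapCoeffsEquiv (e : K ≃+* L) : K⟮X⟯ ≃+* L⟮X⟯ :=
  RingEquiv.ofRingHom (mapCoeffs e) (mapCoeffs e.symm)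
    (ringHom_ext (fun a => by simp) (by simp)) (ringHom_ext (fun a => by simp) (by simp))

end Coeffs

section GaloisGroup

variable {K L : Type} [Field K] [Field L] [Algebra K L]

noncomputable local instance : Algebra K⟮X⟯ L⟮X⟯ := (ratFuncMap K L).toAlgebra

@[simp]
theorem algebraMap_ratFunc_C (a : K) :
    algebraMap K⟮X⟯ L⟮X⟯ (C a) = C (algebraMap K L a) :=
  mapCoeffs_C _ a

@[simp]
theorem algebraMap_ratFunc_X : algebraMap K⟮X⟯ L⟮X⟯ X = X :=
  mapCoeffs_X _

theorem algebraMap_ratFunc_comp_C :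
    (algebraMap K⟮X⟯ L⟮X⟯).comp C = (C : L →+* L⟮X⟯).comp (algebraMap K L) :=
  RingHom.ext algebraMap_ratFunc_C

theorem aeval_C_map_C (p : K[X]) (c : L) :
    aeval (C c) (p.map (C : K →+* K⟮X⟯)) = C (aeval c p) := by
  rw [aeval_def, eval₂_map, algebraMap_ratFunc_comp_C, ← hom_eval₂, aeval_def]

theorem minpoly_C_dvd (c : L) : minpoly K⟮X⟯ (C c) ∣ (minpoly K c).map C :=
  minpoly.dvd _ _ (by rw [aeval_C_map_C, minpoly.aeval, map_zero])

theorem isSeparable_C [Algebra.IsSeparable K L] (c : L) : IsSeparable K⟮X⟯ (C c) :=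
  (Separable.map (Algebra.IsSeparable.isSeparable K c)).of_dvd (minpoly_C_dvd c)

theorem isIntegral_C [Algebra.IsIntegral K L] (c : L) : IsIntegral K⟮X⟯ (C c) :=
  ⟨(minpoly K c).map C, (minpoly.monic (Algebra.IsIntegral.isIntegral c)).map C, by
    rw [← aeval_def, aeval_C_map_C, minpoly.aeval, map_zero]⟩

theorem splits_minpoly_C [Normal K L] (c : L) :
    ((minpoly K⟮X⟯ (C c)).map (algebraMap K⟮X⟯ L⟮X⟯)).Splits := by
  have hsplit : (((minpoly K c).map C).map (algebraMap K⟮X⟯ L⟮X⟯)).Splits := by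
    rw [Polynomial.map_map, algebraMap_ratFunc_comp_C, ← Polynomial.map_map]
    exact (Normal.splits inferInstance c).map C
  refine hsplit.of_dvd ?_ (Polynomial.map_dvd _ (minpoly_C_dvd c))
  exact Polynomial.map_ne_zero <| Polynomial.map_ne_zero <|
    minpoly.ne_zero (Algebra.IsIntegral.isIntegral c)

theorem algebraMap_mem_adjoin_C {S : Set L} {p : L[X]} (hp : ↑p.coeffs ⊆ S) :
    algebraMap L[X] L⟮X⟯ p ∈ adjoin K⟮X⟯ (C '' S) := by
  have hX : (X : L⟮X⟯) ∈ adjoin K⟮X⟯ (C '' S) := by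
    simpa using IntermediateField.algebraMap_mem (adjoin K⟮X⟯ (C '' S)) (X : K⟮X⟯)
  rw [p.as_sum_support_C_mul_X_pow, map_sum]
  refine sum_mem fun n hn => ?_
  rw [map_mul, map_pow, algebraMap_C, algebraMap_X]
  exact mul_mem (subset_adjoin _ _ ⟨_, hp (coeff_mem_coeffs (mem_support_iff.mp hn)), rfl⟩)
    (pow_mem hX n)

theorem mem_adjoin_C_of_coeffs_subset {S : Set L} {y : L⟮X⟯} (hnum : ↑y.num.coeffs ⊆ S)
    (hdenom : ↑y.denom.coeffs ⊆ S) : y ∈ adjoin K⟮X⟯ (C '' S) := by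
  rw [← num_div_denom y]
  exact div_mem (algebraMap_mem_adjoin_C hnum) (algebraMap_mem_adjoin_C hdenom)

theorem adjoin_range_C : adjoin K⟮X⟯ (Set.range (C : L →+* L⟮X⟯)) = ⊤ :=
  eq_top_iff.mpr fun _ _ => by
    simpa only [Set.image_univ] using
      mem_adjoin_C_of_coeffs_subset (Set.subset_univ _) (Set.subset_univ _)

theorem isSeparable [Algebra.IsSeparable K L] : Algebra.IsSeparable K⟮X⟯ L⟮X⟯ := by
  rw [← isSeparable_top, ← adjoin_range_C, isSeparable_adjoin_iff_isSeparable]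
  rintro _ ⟨c, rfl⟩
  exact isSeparable_C c

theorem isAlgebraic [Algebra.IsAlgebraic K L] : Algebra.IsAlgebraic K⟮X⟯ L⟮X⟯ := by
  have := (isAlgebraic_adjoin_iff_isAlgebraic K⟮X⟯ L⟮X⟯ (S := Set.range C)).mpr <| by
    rintro _ ⟨c, rfl⟩
    exact (isIntegral_C c).isAlgebraic
  rw [adjoin_range_C] at this
  exact topEquiv.isAlgebraic

theorem normal [Normal K L] : Normal K⟮X⟯ L⟮X⟯ := by
  have := isAlgebraic (K := K) (L := L)
  refine normal_iff.mpr fun x => ⟨Algebra.IsIntegral.isIntegral x, ?_⟩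
  have hx : x ∈ adjoin K⟮X⟯ (Set.range (C : L →+* L⟮X⟯)) := by
    rw [adjoin_range_C]; exact mem_top
  refine splits_of_mem_adjoin _ _ ?_ hx
  rintro _ ⟨c, rfl⟩
  exact ⟨isIntegral_C c, splits_minpoly_C c⟩

theorem isGalois [IsGalois K L] : IsGalois K⟮X⟯ L⟮X⟯ :=
  have := isSeparable (K := K) (L := L)
  have := normal (K := K) (L := L)
  ⟨⟩

theorem algEquiv_ext {τ₁ τ₂ : Gal(L⟮X⟯/K⟮X⟯)} (h : ∀ c, τ₁ (C c) = τ₂ (C c)) : τ₁ = τ₂ := by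
  have hX : τ₁ X = τ₂ X := by
    rw [← algebraMap_ratFunc_X (K := K), AlgEquiv.commutes, AlgEquiv.commutes]
  exact AlgEquiv.ext (RingHom.congr_fun (ringHom_ext (f := (τ₁ : L⟮X⟯ →+* L⟮X⟯)) (g := τ₂) h hX))

noncomputable def mapCoeffsAlgEquiv (σ : Gal(L/K)) : Gal(L⟮X⟯/K⟮X⟯) :=
  AlgEquiv.ofRingEquiv (f := mapCoeffsEquiv σ.toRingEquiv) fun x => by
    change mapCoeffs (σ : L →+* L) (mapCoeffs (algebraMap K L) x) = mapCoeffs (algebraMap K L) x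
    rw [← RingHom.comp_apply, ← mapCoeffs_comp,
      show (σ : L →+* L).comp (algebraMap K L) = algebraMap K L from RingHom.ext σ.commutes]

@[simp]
theorem mapCoeffsAlgEquiv_C (σ : Gal(L/K)) (c : L) : mapCoeffsAlgEquiv σ (C c) = C (σ c) :=
  mapCoeffs_C _ c

variable (K L) in
noncomputable def galMapCoeffs : Gal(L/K) →* Gal(L⟮X⟯/K⟮X⟯) :=
  MonoidHom.mk' mapCoeffsAlgEquiv fun σ τ => algEquiv_ext fun c => by simp

@[simp]
theorem galMapCoeffs_C (σ : Gal(L/K)) (c : L) : galMapCoeffs K L σ (C c) = C (σ c) :=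
  mapCoeffs_C _ c

theorem galMapCoeffs_injective : Function.Injective (galMapCoeffs K L) := fun σ τ h =>
  AlgEquiv.ext fun c => C_injective <| by rw [← galMapCoeffs_C, h, galMapCoeffs_C]

theorem exists_eq_C [Normal K L] (τ : Gal(L⟮X⟯/K⟮X⟯)) (c : L) : ∃ d, τ (C c) = C d := by
  have hsplit : ((minpoly K c).map (algebraMap K L)).Splits := Normal.splits inferInstance c
  have hroot : (((minpoly K c).map (algebraMap K L)).map C).IsRoot (τ (C c)) := by
    rw [IsRoot, Polynomial.map_map, ← algebraMap_ratFunc_comp_C, ← Polynomial.map_map, eval_map,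
      ← aeval_def, aeval_algEquiv, AlgHom.comp_apply, aeval_C_map_C, minpoly.aeval, map_zero,
      map_zero]
  obtain ⟨d, hd⟩ := hsplit.mem_range_of_isRoot
    (Polynomial.map_ne_zero (minpoly.ne_zero (Algebra.IsIntegral.isIntegral c))) hroot
  exact ⟨d, hd.symm⟩

theorem exists_algEquiv_apply_C [Normal K L] (τ : Gal(L⟮X⟯/K⟮X⟯)) :
    ∃ σ : Gal(L/K), ∀ c, τ (C c) = C (σ c) := by
  choose g hg using exists_eq_C τ
  let σ : L →ₐ[K] L :=
    { toFun := g
      map_one' := C_injective <| by rw [← hg, map_one, map_one]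
      map_mul' := fun a b => C_injective <| by rw [map_mul, ← hg, ← hg, ← hg, map_mul, map_mul]
      map_zero' := C_injective <| by rw [← hg, map_zero, map_zero]
      map_add' := fun a b => C_injective <| by rw [map_add, ← hg, ← hg, ← hg, map_add, map_add]
      commutes' := fun a => C_injective <| by
        rw [← hg, ← algebraMap_ratFunc_C, AlgEquiv.commutes, algebraMap_ratFunc_C] }
  exact ⟨AlgEquiv.ofBijective σ (Algebra.IsAlgebraic.algHom_bijective σ), hg⟩

theorem galMapCoeffs_surjective [Normal K L] : Function.Surjective (galMapCoeffs K L) := by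
  intro τ
  obtain ⟨σ, hσ⟩ := exists_algEquiv_apply_C τ
  exact ⟨σ, algEquiv_ext fun c => by rw [galMapCoeffs_C, hσ]⟩

theorem galMapCoeffs_mem_fixingSubgroup_iff (σ : Gal(L/K)) (S : Set L) :
    galMapCoeffs K L σ ∈ (adjoin K⟮X⟯ (C '' S)).fixingSubgroup ↔ ∀ c ∈ S, σ c = c := by
  rw [IntermediateField.mem_fixingSubgroup_iff]
  refine ⟨fun h c hc => C_injective ?_, fun h x hx => ?_⟩
  · rw [← galMapCoeffs_C, h _ (subset_adjoin _ _ ⟨c, hc, rfl⟩)]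
  induction hx using adjoin_induction with
  | mem _ hy =>
    obtain ⟨c, hc, rfl⟩ := hy
    rw [galMapCoeffs_C, h c hc]
  | algebraMap r => exact AlgEquiv.commutes _ r
  | add _ _ _ _ ha hb => rw [map_add, ha, hb]
  | inv _ _ ha => rw [map_inv₀, ha]
  | mul _ _ _ _ ha hb => rw [map_mul, ha, hb]

theorem map_galMapCoeffs_fixingSubgroup [Normal K L] (E : IntermediateField K L) :
    E.fixingSubgroup.map (galMapCoeffs K L) = (adjoin K⟮X⟯ (C '' E)).fixingSubgroup := by
  ext τ
  obtain ⟨σ, rfl⟩ := galMapCoeffs_surjective τ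
  rw [Subgroup.mem_map_iff_mem galMapCoeffs_injective, galMapCoeffs_mem_fixingSubgroup_iff,
    IntermediateField.mem_fixingSubgroup_iff]
  exact Iff.rfl

theorem exists_finset_le_adjoin_C (F : IntermediateField K⟮X⟯ L⟮X⟯) [FiniteDimensional K⟮X⟯ F] :
    ∃ T : Finset L, F ≤ adjoin K⟮X⟯ (C '' T) := by
  classical
  obtain ⟨t, rfl⟩ := F.fg_of_fg_toSubalgebra <| Subalgebra.fg_of_fg_toSubmodule <|
    (Submodule.fg_iff_finiteDimensional _).mpr ‹_›
  refine ⟨t.biUnion fun y => y.num.coeffs ∪ y.denom.coeffs,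
    adjoin_le_iff.mpr fun y hy => mem_adjoin_C_of_coeffs_subset ?_ ?_⟩
  · exact_mod_cast Finset.subset_union_left.trans (Finset.subset_biUnion_of_mem
      (fun y : L⟮X⟯ => y.num.coeffs ∪ y.denom.coeffs) (Finset.mem_coe.mp hy))
  · exact_mod_cast Finset.subset_union_right.trans (Finset.subset_biUnion_of_mem
      (fun y : L⟮X⟯ => y.num.coeffs ∪ y.denom.coeffs) (Finset.mem_coe.mp hy))

theorem continuous_galMapCoeffs [Algebra.IsAlgebraic K L] : Continuous (galMapCoeffs K L) := by
  refine continuous_of_continuousAt_one _ (continuousAt_def.mpr fun s hs => ?_)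
  rw [map_one] at hs
  obtain ⟨F, _, hFs⟩ := (krullTopology_mem_nhds_one_iff _ _ s).mp hs
  obtain ⟨T, hT⟩ := exists_finset_le_adjoin_C F
  refine (krullTopology_mem_nhds_one_iff K L _).mpr ⟨adjoin K T, ?_, fun σ hσ => hFs ?_⟩
  · exact finiteDimensional_adjoin fun c _ => Algebra.IsIntegral.isIntegral c
  · refine fixingSubgroup_antitone hT ((galMapCoeffs_mem_fixingSubgroup_iff σ T).mpr fun c hc => ?_)
    exact (IntermediateField.mem_fixingSubgroup_iff _ _).mp hσ c (subset_adjoin _ _ hc)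

variable (K L) in
noncomputable def galMapCoeffsEquiv [IsGalois K L] : Gal(L/K) ≃ₜ* Gal(L⟮X⟯/K⟮X⟯) :=
  haveI := isGalois (K := K) (L := L)
  haveI := krullTopology_t2 (K := K⟮X⟯) (L := L⟮X⟯)
  let e := MulEquiv.ofBijective (galMapCoeffs K L) ⟨galMapCoeffs_injective, galMapCoeffs_surjective⟩
  { e with
    continuous_toFun := continuous_galMapCoeffs
    continuous_invFun :=
      (continuous_galMapCoeffs.homeoOfEquivCompactToT2 (f := e.toEquiv)).symm.continuous }

end GaloisGroup

end RatFunc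

/-- Let `F = E(X)` and `F₁ = E_sep(X)`.  Then `F₁/F` is Galois and there is a
canonical isomorphism of profinite groups `𝒢_E ≃ Gal(F₁/F)` (acting on coefficients) under
which, for every intermediate field `E'` of `E_sep/E`, the image of `𝒢_{E'}` is
`Gal(F₁/E'(X))`. -/
theorem ratFunc_galois_and_galoisGroup_iso (E Ω : Type) [Field E] [Field Ω] [Algebra E Ω]
    [IsSepClosure E Ω] :
    letI : Algebra (RatFunc E) (RatFunc Ω) := (ratFuncMap E Ω).toAlgebra
    IsGalois (RatFunc E) (RatFunc Ω) ∧
      ∃ φ : (Ω ≃ₐ[E] Ω) ≃* (RatFunc Ω ≃ₐ[RatFunc E] RatFunc Ω),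
        Continuous φ ∧ Continuous φ.symm ∧
        (∀ (σ : Ω ≃ₐ[E] Ω) (x : Ω), (φ σ) (RatFunc.C x) = RatFunc.C (σ x)) ∧
        ∀ E' : IntermediateField E Ω,
          Subgroup.map φ.toMonoidHom (fixingSubgroup E') =
            fixingSubgroup
              (IntermediateField.adjoin (RatFunc E) (RatFunc.C '' (E' : Set Ω))) :=
  ⟨RatFunc.isGalois, (RatFunc.galMapCoeffsEquiv E Ω).toMulEquiv,
    (RatFunc.galMapCoeffsEquiv E Ω).continuous, (RatFunc.galMapCoeffsEquiv E Ω).symm.continuous,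
    RatFunc.galMapCoeffs_C, RatFunc.map_galMapCoeffs_fixingSubgroup⟩
end

section
/- Let $E$ be a field of characteristic $q > 0$, $B$ a $q$-basis of $E$ over $E^q$ (empty if $E = E^q$), and $U$ a separable algebraic extension of $E$. Then $B$ is a $q$-basis of $U$ over $U^q$; in particular $[U : U^q] = [E : E^q]$ whenever $[E : E^q]$ is finite. -/
/-
Since `U/E` is separable, the `q`-th powers `b_j ^ q` of an `E`-basis `(b_j)` of `U` are again an
`E`-basis, so `U = ⊕ E b_j ^ q` while `U^q = ⊕ E^q b_j ^ q`. Hence the coordinates of a relation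
`∑ g_i w_i = 0` with `g_i ∈ U^q` are `E^q`-relations among the `w_i`, and every `e b_j ^ q` with
`e ∈ E` lies in the `U^q`-span of `E`: an `E^q`-basis `(w_i)` of `E` stays a `U^q`-basis of `U`.
-/

/-- `B` is a `q`-basis of `E` over `E^q`: the monomials `∏ b^(e_b)` with `0 ≤ e_b < q` form a
basis of `E` as a vector space over the subfield `E^q` of `q`-th powers. -/
def IsQBasis (q : ℕ) [Fact q.Prime] (E : Type) [Field E] [CharP E q] (B : Set E) : Prop :=
  ∃ basis : Module.Basis {f : B →₀ ℕ // ∀ b : B, f b < q} ((frobenius E q).fieldRange) E,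
    ∀ f : {f : B →₀ ℕ // ∀ b : B, f b < q},
      basis f = (f : B →₀ ℕ).prod fun b e => (b : E) ^ e

open Module Submodule

section

variable {q : ℕ} {E U : Type*} [Field E] [Field U] [Algebra E U] [ExpChar E q]

@[simp]
theorem Module.Basis.mapPowExpCharPowOfIsSeparable_apply [Algebra.IsSeparable E U] (n : ℕ)
    {J : Type*} (b : Basis J E U) (j : J) : b.mapPowExpCharPowOfIsSeparable q n j = b j ^ q ^ n :=
  Basis.mk_apply _ _ j

variable [ExpChar U q]

theorem algebraMap_mem_fieldRange_frobenius {c : E} (hc : c ∈ (frobenius E q).fieldRange) :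
    algebraMap E U c ∈ (frobenius U q).fieldRange := by
  obtain ⟨a, rfl⟩ := hc
  exact ⟨algebraMap E U a, ((algebraMap E U).map_frobenius q a).symm⟩

variable [Algebra.IsSeparable E U]

theorem Module.Basis.repr_mapPowExpCharPowOfIsSeparable_pow (n : ℕ) {J : Type*} (b : Basis J E U) (x : U) (j : J) :
    (b.mapPowExpCharPowOfIsSeparable q n).repr (x ^ q ^ n) j = b.repr x j ^ q ^ n := by
  have hexpand : x ^ q ^ n = Finsupp.linearCombination E (b.mapPowExpCharPowOfIsSeparable q n)
      (Finsupp.mapRange (iterateFrobenius E q n) (map_zero _) (b.repr x)) := by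
    conv_lhs => rw [← b.linearCombination_repr x]
    rw [Finsupp.linearCombination_apply, Finsupp.linearCombination_apply,
      Finsupp.sum_mapRange_index (by simp), ← iterateFrobenius_def, map_finsuppSum]
    simp [iterateFrobenius_def, smul_pow]
  rw [hexpand, Module.Basis.repr_linearCombination, Finsupp.mapRange_apply, iterateFrobenius_def]

theorem LinearIndependent.algebraMap_of_isSeparable {I : Type*} {w : I → E}
    (hw : LinearIndependent (frobenius E q).fieldRange w) :
    LinearIndependent (frobenius U q).fieldRange (algebraMap E U ∘ w) := by
  let b := Basis.ofVectorSpace E U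
  let b' := b.mapPowExpCharPowOfIsSeparable q 1
  rw [linearIndependent_iff']
  intro s g hg i hi
  obtain ⟨u, rfl⟩ := (frobenius U q).rangeRestrictField_bijective.2.comp_left g
  have hcoord : ∀ j, ∀ i ∈ s, b.repr (u i) j = 0 := by
    intro j
    have hj : ∑ i ∈ s, (frobenius E q).rangeRestrictField (b.repr (u i) j) • w i = 0 := by
      have hterm : ∀ i, (frobenius U q).rangeRestrictField (u i) • algebraMap E U (w i) =
          w i • u i ^ q ^ 1 := fun i => by
        change u i ^ q * algebraMap E U (w i) = _
        rw [Algebra.smul_def, pow_one, mul_comm]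
      have := congrArg (fun x => b'.repr x j) hg
      simp only [Function.comp_apply, hterm, map_sum, map_smul, Finsupp.finsetSum_apply,
        Finsupp.smul_apply, b', b.repr_mapPowExpCharPowOfIsSeparable_pow] at this
      simpa [Subfield.smul_def, frobenius_def, mul_comm] using this
    intro i hi
    simpa using congrArg Subtype.val (linearIndependent_iff'.mp hw s _ hj i hi)
  have : u i = 0 := b.repr.injective (by ext j; simp [hcoord j i hi])
  simp [this]

theorem span_algebraMap_eq_top_of_isSeparable {I : Type*} {w : I → E}
    (hw : span (frobenius E q).fieldRange (Set.range w) = ⊤) :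
    span (frobenius U q).fieldRange (Set.range (algebraMap E U ∘ w)) = ⊤ := by
  set S := span (frobenius U q).fieldRange (Set.range (algebraMap E U ∘ w))
  have hE : ∀ e : E, algebraMap E U e ∈ S := fun e => by
    induction hw ▸ mem_top (x := e) using span_induction with
    | mem _ hy => obtain ⟨i, rfl⟩ := hy; exact subset_span ⟨i, rfl⟩
    | zero => simp
    | add _ _ _ _ hy hz => simpa using add_mem hy hz
    | smul c y _ hy =>
      have := smul_mem S ⟨_, algebraMap_mem_fieldRange_frobenius c.2⟩ hy
      simpa [Subfield.smul_def] using this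
  let b := (Basis.ofVectorSpace E U).mapPowExpCharPowOfIsSeparable q 1
  refine eq_top_iff'.mpr fun x => ?_
  rw [← b.linearCombination_repr x, Finsupp.linearCombination_apply]
  refine Submodule.finsuppSum_mem _ _ _ _ fun j _ => ?_
  have hbj : b j ∈ (frobenius U q).fieldRange :=
    ⟨Basis.ofVectorSpace E U j, by simp [b, frobenius_def]⟩
  convert smul_mem S ⟨b j, hbj⟩ (hE (b.repr x j)) using 1
  rw [Algebra.smul_def, mul_comm]
  rfl

noncomputable def Module.Basis.algebraMapOfIsSeparable {I : Type*}
    (bE : Basis I (frobenius E q).fieldRange E) : Basis I (frobenius U q).fieldRange U :=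
  .mk bE.linearIndependent.algebraMap_of_isSeparable
    (span_algebraMap_eq_top_of_isSeparable bE.span_eq).ge

@[simp]
theorem Module.Basis.algebraMapOfIsSeparable_apply {I : Type*}
    (bE : Basis I (frobenius E q).fieldRange E) (i : I) :
    bE.algebraMapOfIsSeparable (U := U) i = algebraMap E U (bE i) :=
  Basis.mk_apply _ _ i

theorem finrank_frobeniusFieldRange_eq_of_isSeparable :
    finrank (frobenius U q).fieldRange U = finrank (frobenius E q).fieldRange E := by
  let bE := Basis.ofVectorSpace (frobenius E q).fieldRange E
  rw [finrank_eq_nat_card_basis (bE.algebraMapOfIsSeparable (U := U)),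
    finrank_eq_nat_card_basis bE]

end

theorem IsQBasis.map_of_isSeparable {q : ℕ} [Fact q.Prime] {E U : Type} [Field E] [CharP E q]
    [Field U] [Algebra E U] [CharP U q] [Algebra.IsSeparable E U] {B : Set E}
    (hB : IsQBasis q E B) : IsQBasis q U (algebraMap E U '' B) := by
  obtain ⟨bE, hbE⟩ := hB
  let eB : B ≃ algebraMap E U '' B := Equiv.Set.image _ B (algebraMap E U).injective
  let ι : {f : B →₀ ℕ // ∀ b, f b < q} ≃ {f : algebraMap E U '' B →₀ ℕ // ∀ b, f b < q} :=
    Equiv.subtypeEquiv (Finsupp.equivCongrLeft eB) fun _ => eB.forall_congr_left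
  refine ⟨bE.algebraMapOfIsSeparable.reindex ι, ι.forall_congr_right.mp fun f => ?_⟩
  rw [Basis.reindex_apply, ι.symm_apply_apply, Basis.algebraMapOfIsSeparable_apply, hbE,
    map_finsuppProd]
  change _ = (Finsupp.equivMapDomain eB f.1).prod _
  simp [Finsupp.prod_equivMapDomain, eB]

/-- if `B` is a `q`-basis of `E` over `E^q` and `U` is a separable algebraic
extension of `E`, then (the image of) `B` is a `q`-basis of `U` over `U^q`; in particular
`[U : U^q] = [E : E^q]`. -/
theorem qBasis_stable_under_separable_extension (q : ℕ) [Fact q.Prime]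
    (E : Type) [Field E] [CharP E q] (B : Set E) (hB : IsQBasis q E B)
    (U : Type) [Field U] [Algebra E U] [CharP U q] [Algebra.IsSeparable E U] :
    IsQBasis q U (algebraMap E U '' B) ∧
      Module.finrank ((frobenius U q).fieldRange) U =
        Module.finrank ((frobenius E q).fieldRange) E :=
  ⟨hB.map_of_isSeparable, finrank_frobeniusFieldRange_eq_of_isSeparable⟩
end
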